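/- arXiv:2602.16572 — 3 statements merged into one kernel-verified Lean document; each statement's English description precedes it below -/
import Mathlib

section
/- Let R be a commutative unital ring, let n be a natural number, and let A₀ = Mat_n(R) be the algebra of n×n matrices over R. Let C be a unital (not necessarily commutative) R-algebra and let B₀ be a unital R-subalgebra of the tensor product algebra A₀ ⊗_R C that contains A₀ ⊗ 1 (the image of the canonical inclusion a ↦ a ⊗ 1). Define D₀ := { c ∈ C : 1 ⊗ c ∈ B₀ }. Then D₀ is a unital R-subalgebra of C and B₀ is exactly the subalgebra of A₀ ⊗_R C generated by A₀ ⊗ 1 and 1 ⊗ D₀; equivalently, B₀ = A₀ ⊗_R D₀, i.e. every element of B₀ is a finite sum of elements a ⊗ d with a ∈ A₀ and d ∈ D₀. -/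
open scoped TensorProduct
open Matrix

section aux
variable (R : Type*) [CommRing R] {n : ℕ} (C : Type*) [Ring C] [Algebra R C]

noncomputable def entryT (i j : Fin n) : Matrix (Fin n) (Fin n) R ⊗[R] C →ₗ[R] C :=
  TensorProduct.lift
    (LinearMap.mk₂ R (fun a c => a i j • c)
      (fun a a' c => by simp [Matrix.add_apply, add_smul])
      (fun r a c => by simp [Matrix.smul_apply, smul_eq_mul, mul_smul])
      (fun a c c' => by simp [smul_add])
      (fun r a c => smul_comm _ _ _))

@[simp] lemma entryT_tmul (i j : Fin n) (a : Matrix (Fin n) (Fin n) R) (c : C) :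
    entryT R C i j (a ⊗ₜ[R] c) = a i j • c := rfl

lemma sum_stdBasis_one : ∑ k : Fin n, Matrix.single k k (1 : R) = 1 := by
  ext i j
  rw [Matrix.sum_apply]
  by_cases h : i = j
  · subst h; simp [Matrix.single, Matrix.one_apply, and_self, Finset.sum_ite_eq', eq_comm]
  · rw [Matrix.one_apply_ne h, Finset.sum_eq_zero]
    intro k _
    apply single_apply_of_ne
    rintro ⟨h1, h2⟩
    exact h (h1.symm.trans h2)

lemma conj_std (i j k : Fin n) (a : Matrix (Fin n) (Fin n) R) :
    Matrix.single k i (1 : R) * a * Matrix.single j k (1 : R)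
      = a i j • Matrix.single k k (1 : R) := by
  ext p q
  simp only [Matrix.mul_apply, Matrix.single, of_apply, Matrix.smul_apply, ite_and,
    boole_mul, mul_boole, smul_eq_mul]
  by_cases hp : p = k <;> by_cases hq : q = k <;>
    simp [hp, hq, Finset.sum_ite_eq, Finset.sum_ite_eq', eq_comm, mul_comm] <;>
    split_ifs <;> simp_all

lemma tensor_decomp (x : Matrix (Fin n) (Fin n) R ⊗[R] C) :
    x = ∑ i : Fin n, ∑ j : Fin n, Matrix.single i j (1 : R) ⊗ₜ[R] entryT R C i j x := by
  induction x using TensorProduct.induction_on with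
  | zero => simp
  | tmul a c =>
      have h1 : ∀ i j : Fin n, Matrix.single i j (1 : R) ⊗ₜ[R] (a i j • c)
          = Matrix.single i j (a i j) ⊗ₜ[R] c := by
        intro i j
        have : Matrix.single i j (a i j) = a i j • Matrix.single i j (1 : R) := by
          rw [smul_single, smul_eq_mul, mul_one]
        rw [this]
        exact (TensorProduct.smul_tmul _ _ _).symm
      simp only [entryT_tmul, h1, ← TensorProduct.sum_tmul]
      rw [← matrix_eq_sum_single]
  | add x y hx hy =>
      simp only [map_add, TensorProduct.tmul_add, Finset.sum_add_distrib, ← hx, ← hy]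

lemma conj_eq (i j : Fin n) (x : Matrix (Fin n) (Fin n) R ⊗[R] C) :
    ∑ k : Fin n, (Matrix.single k i (1 : R) ⊗ₜ[R] (1 : C)) * x *
        (Matrix.single j k (1 : R) ⊗ₜ[R] (1 : C))
      = (1 : Matrix (Fin n) (Fin n) R) ⊗ₜ[R] entryT R C i j x := by
  induction x using TensorProduct.induction_on with
  | zero => simp
  | tmul a c =>
      simp only [Algebra.TensorProduct.tmul_mul_tmul, one_mul, mul_one, conj_std,
        entryT_tmul, ← TensorProduct.smul_tmul']
      rw [← Finset.smul_sum, ← TensorProduct.sum_tmul, sum_stdBasis_one]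
      rw [TensorProduct.tmul_smul]
  | add x y hx hy =>
      simp only [mul_add, add_mul, map_add, TensorProduct.tmul_add,
        Finset.sum_add_distrib, hx, hy]
end aux


/-- Let `R` be a commutative unital ring, `A₀ = Mat_n(R)`, `C` a unital
`R`-algebra, and `B₀` a unital `R`-subalgebra of `A₀ ⊗[R] C` containing `A₀ ⊗ 1`.  With
`D₀ := {c : C | 1 ⊗ c ∈ B₀}`, the set `D₀` is a unital `R`-subalgebra of `C`, `B₀` is the
subalgebra generated by `A₀ ⊗ 1` and `1 ⊗ D₀`, and every element of `B₀` is a finite sum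
of elements `a ⊗ d` with `a ∈ A₀`, `d ∈ D₀`. -/
theorem stmt0 (R : Type*) [CommRing R] (n : ℕ)
    (C : Type*) [Ring C] [Algebra R C]
    (B₀ : Subalgebra R (Matrix (Fin n) (Fin n) R ⊗[R] C))
    (hB₀ : ∀ a : Matrix (Fin n) (Fin n) R, a ⊗ₜ[R] (1 : C) ∈ B₀) :
    (∃ D₀ : Subalgebra R C,
        (D₀ : Set C) = {c : C | (1 : Matrix (Fin n) (Fin n) R) ⊗ₜ[R] c ∈ B₀}) ∧
    B₀ = Algebra.adjoin R
        ({x : Matrix (Fin n) (Fin n) R ⊗[R] C |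
            ∃ a : Matrix (Fin n) (Fin n) R, x = a ⊗ₜ[R] (1 : C)} ∪
         {x : Matrix (Fin n) (Fin n) R ⊗[R] C |
            ∃ d : C, (1 : Matrix (Fin n) (Fin n) R) ⊗ₜ[R] d ∈ B₀ ∧
              x = (1 : Matrix (Fin n) (Fin n) R) ⊗ₜ[R] d}) ∧
    (B₀ : Set (Matrix (Fin n) (Fin n) R ⊗[R] C)) =
      (Submodule.span R
        {x : Matrix (Fin n) (Fin n) R ⊗[R] C |
          ∃ (a : Matrix (Fin n) (Fin n) R) (d : C),
            (1 : Matrix (Fin n) (Fin n) R) ⊗ₜ[R] d ∈ B₀ ∧ x = a ⊗ₜ[R] d} :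
        Set (Matrix (Fin n) (Fin n) R ⊗[R] C)) := by
  have key : ∀ x ∈ B₀, ∀ i j : Fin n, (1 : Matrix (Fin n) (Fin n) R) ⊗ₜ[R] entryT R C i j x ∈ B₀ := by
    intro x hx i j
    rw [← conj_eq]
    exact Subalgebra.sum_mem _ fun k _ => B₀.mul_mem (B₀.mul_mem (hB₀ _) hx) (hB₀ _)
  have tmul_mem : ∀ (a : Matrix (Fin n) (Fin n) R) (d : C),
      (1 : Matrix (Fin n) (Fin n) R) ⊗ₜ[R] d ∈ B₀ → a ⊗ₜ[R] d ∈ B₀ := by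
    intro a d hd
    have : a ⊗ₜ[R] d = (a ⊗ₜ[R] (1 : C)) * ((1 : Matrix (Fin n) (Fin n) R) ⊗ₜ[R] d) := by
      rw [Algebra.TensorProduct.tmul_mul_tmul, mul_one, one_mul]
    rw [this]; exact B₀.mul_mem (hB₀ a) hd
  refine ⟨⟨B₀.comap (Algebra.TensorProduct.includeRight), ?_⟩, ?_, ?_⟩
  · ext c
    simp [Subalgebra.mem_comap, Algebra.TensorProduct.includeRight_apply]
  · apply le_antisymm
    · intro x hx
      rw [tensor_decomp R C x]
      refine Subalgebra.sum_mem _ fun i _ => Subalgebra.sum_mem _ fun j _ => ?_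
      have heq : (Matrix.single i j (1:R)) ⊗ₜ[R] entryT R C i j x
          = ((Matrix.single i j (1:R)) ⊗ₜ[R] (1:C)) *
            ((1 : Matrix (Fin n) (Fin n) R) ⊗ₜ[R] entryT R C i j x) := by
        rw [Algebra.TensorProduct.tmul_mul_tmul, mul_one, one_mul]
      rw [heq]
      exact mul_mem (Algebra.subset_adjoin (Or.inl ⟨_, rfl⟩))
        (Algebra.subset_adjoin (Or.inr ⟨_, key x hx i j, rfl⟩))
    · apply Algebra.adjoin_le
      rintro x (⟨a, rfl⟩ | ⟨d, hd, rfl⟩)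
      · exact hB₀ a
      · exact hd
  · apply Set.Subset.antisymm
    · intro x hx
      rw [tensor_decomp R C x]
      refine Submodule.sum_mem _ fun i _ => Submodule.sum_mem _ fun j _ => ?_
      exact Submodule.subset_span ⟨_, _, key x hx i j, rfl⟩
    · intro x hx
      refine Submodule.span_induction ?_ ?_ ?_ ?_ hx
      · rintro y ⟨a, d, hd, rfl⟩; exact tmul_mem a d hd
      · exact B₀.zero_mem
      · intro a b _ _ ha hb; exact B₀.add_mem ha hb
      · intro r y _ hy; exact B₀.smul_mem hy r
end

section
/- Let R be a commutative unital ring and let A be a locally matrix R-algebra, i.e. there is a directed family (A_λ) of unital R-subalgebras of A, each isomorphic as a unital R-algebra to a full matrix algebra Mat_{n(λ)}(R) and whose union (equivalently, directed supremum) is all of A. Let C be a unital R-algebra and let B be a unital R-subalgebra of A ⊗_R C with A ⊗ 1 ⊆ B. Define D := { c ∈ C : 1 ⊗ c ∈ B }. Then D is a unital R-subalgebra of C and B is exactly the subalgebra of A ⊗_R C generated by A ⊗ 1 and 1 ⊗ D; equivalently B = A ⊗_R D, i.e. every element of B is a finite sum of elements a ⊗ d with a ∈ A, d ∈ D. -/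
open scoped TensorProduct

lemma aux_sum_stdBasisMatrix_diag (n : ℕ) (R : Type*) [CommRing R] :
    ∑ p : Fin n, Matrix.single p p (1:R) = 1 := by
  ext i j
  simp only [Matrix.sum_apply, Matrix.single, Matrix.of_apply, Matrix.one_apply, ite_and]
  rw [Finset.sum_ite_eq']
  simp

lemma aux_stdBasis_mul_mul (n : ℕ) (R : Type*) [CommRing R]
    (M : Matrix (Fin n) (Fin n) R) (p q k l : Fin n) :
    Matrix.single p k 1 * M * Matrix.single l q 1
      = M k l • Matrix.single p q 1 := by
  ext i j
  simp only [Matrix.mul_apply, Matrix.single, Matrix.of_apply, Matrix.smul_apply, ite_and,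
    smul_eq_mul, boole_mul, mul_boole, ite_mul, zero_mul]
  simp [Finset.sum_ite_eq, Finset.sum_ite_eq']
  split_ifs <;> simp

theorem stmt1 (R : Type*) [CommRing R]
    (A : Type*) [Ring A] [Algebra R A]
    (ι : Type*) (Afam : ι → Subalgebra R A)
    (hdir : Directed (· ≤ ·) Afam)
    (hiso : ∀ i : ι, ∃ n : ℕ, Nonempty (Afam i ≃ₐ[R] Matrix (Fin n) (Fin n) R))
    (hunion : (⋃ i : ι, (Afam i : Set A)) = Set.univ)
    (C : Type*) [Ring C] [Algebra R C]
    (B : Subalgebra R (A ⊗[R] C))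
    (hB : ∀ a : A, a ⊗ₜ[R] (1 : C) ∈ B) :
    (∃ D : Subalgebra R C, (D : Set C) = {c : C | (1 : A) ⊗ₜ[R] c ∈ B}) ∧
    B = Algebra.adjoin R
        ({x : A ⊗[R] C | ∃ a : A, x = a ⊗ₜ[R] (1 : C)} ∪
         {x : A ⊗[R] C | ∃ d : C, (1 : A) ⊗ₜ[R] d ∈ B ∧ x = (1 : A) ⊗ₜ[R] d}) ∧
    (B : Set (A ⊗[R] C)) =
      (Submodule.span R
        {x : A ⊗[R] C | ∃ (a : A) (d : C), (1 : A) ⊗ₜ[R] d ∈ B ∧ x = a ⊗ₜ[R] d} :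
        Set (A ⊗[R] C)) := by
  classical
  have hι : Nonempty ι := by
    have h1 : (1:A) ∈ ⋃ i, (Afam i : Set A) := by rw [hunion]; trivial
    obtain ⟨t, ⟨i, rfl⟩, -⟩ := h1
    exact ⟨i⟩
  -- span of the generating set is contained in B
  have spanle : Submodule.span R
      {x : A ⊗[R] C | ∃ (a : A) (d : C), (1 : A) ⊗ₜ[R] d ∈ B ∧ x = a ⊗ₜ[R] d}
      ≤ Subalgebra.toSubmodule B := by
    rw [Submodule.span_le]
    rintro x ⟨a, d, hd, rfl⟩
    have := B.mul_mem (hB a) hd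
    rw [Algebra.TensorProduct.tmul_mul_tmul, mul_one, one_mul] at this; exact this
  -- key: every element of B lies in the span
  have key : ∀ x ∈ B, x ∈ Submodule.span R
      {x : A ⊗[R] C | ∃ (a : A) (d : C), (1 : A) ⊗ₜ[R] d ∈ B ∧ x = a ⊗ₜ[R] d} := by
    intro x hx
    obtain ⟨s, rfl⟩ := TensorProduct.exists_finset (R := R) x
    have hmem : ∀ p : {p : A × C // p ∈ s}, ∃ j, (p.1.1 : A) ∈ Afam j := by
      intro p
      have h1 : p.1.1 ∈ ⋃ i, (Afam i : Set A) := by rw [hunion]; trivial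
      simpa using h1
    choose f hf using hmem
    obtain ⟨i, hi⟩ := hdir.finset_le (s.attach.image f)
    have hip : ∀ p : {p : A × C // p ∈ s}, p.1.1 ∈ Afam i := fun p =>
      hi (f p) (Finset.mem_image_of_mem f (s.mem_attach p)) (hf p)
    obtain ⟨n, ⟨e⟩⟩ := hiso i
    set φ : Matrix (Fin n) (Fin n) R →ₐ[R] A := (Afam i).val.comp e.symm.toAlgHom with hφ
    set M : {p : A × C // p ∈ s} → Matrix (Fin n) (Fin n) R :=
      fun p => e ⟨p.1.1, hip p⟩ with hM
    have hφa : ∀ p, φ (M p) = p.1.1 := by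
      intro p
      simp [hφ, hM]
    have F2 : ∑ q : Fin n, φ (Matrix.single q q 1) = 1 := by
      rw [← map_sum, aux_sum_stdBasisMatrix_diag, map_one]
    have F3 : ∀ (N : Matrix (Fin n) (Fin n) R) (p q k l : Fin n),
        φ (Matrix.single p k 1) * φ N * φ (Matrix.single l q 1)
          = N k l • φ (Matrix.single p q 1) := by
      intro N p q k l
      rw [← map_mul, ← map_mul, aux_stdBasis_mul_mul, map_smul]
    -- rewrite x as a double sum of elementary tensors with matrix-unit left factors
    have hx' : ∑ p ∈ s, p.1 ⊗ₜ[R] p.2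
        = ∑ k : Fin n, ∑ l : Fin n,
            (φ (Matrix.single k l 1)) ⊗ₜ[R] (∑ p ∈ s.attach, M p k l • p.1.2) := by
      rw [← Finset.sum_attach s (fun p => p.1 ⊗ₜ[R] p.2)]
      have hterm : ∀ p ∈ s.attach, p.1.1 ⊗ₜ[R] p.1.2
          = ∑ k : Fin n, ∑ l : Fin n,
              M p k l • ((φ (Matrix.single k l 1)) ⊗ₜ[R] p.1.2) := by
        intro p _
        conv_lhs => rw [← hφa p, Matrix.matrix_eq_sum_single (M p)]
        simp only [map_sum]
        rw [TensorProduct.sum_tmul]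
        refine Finset.sum_congr rfl fun k _ => ?_
        rw [TensorProduct.sum_tmul]
        refine Finset.sum_congr rfl fun l _ => ?_
        rw [show Matrix.single k l (M p k l)
              = M p k l • Matrix.single k l (1:R) by
            rw [Matrix.smul_single, smul_eq_mul, mul_one],
          map_smul, TensorProduct.smul_tmul']
      rw [Finset.sum_congr rfl hterm, Finset.sum_comm]
      refine Finset.sum_congr rfl fun k _ => ?_
      rw [Finset.sum_comm]
      refine Finset.sum_congr rfl fun l _ => ?_
      rw [TensorProduct.tmul_sum]
      exact Finset.sum_congr rfl fun p _ => (TensorProduct.tmul_smul _ _ _).symm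
    -- each coefficient c' k l satisfies 1 ⊗ c' k l ∈ B
    have hC : ∀ k l : Fin n, (1:A) ⊗ₜ[R] (∑ p ∈ s.attach, M p k l • p.1.2) ∈ B := by
      intro k l
      have hy : ∑ q : Fin n,
          ((φ (Matrix.single q k 1)) ⊗ₜ[R] (1:C)) * (∑ p ∈ s, p.1 ⊗ₜ[R] p.2)
            * ((φ (Matrix.single l q 1)) ⊗ₜ[R] (1:C)) ∈ B :=
        sum_mem fun q _ => B.mul_mem (B.mul_mem (hB _) hx) (hB _)
      have eq1 : ∑ q : Fin n,
          ((φ (Matrix.single q k 1)) ⊗ₜ[R] (1:C)) * (∑ p ∈ s, p.1 ⊗ₜ[R] p.2)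
            * ((φ (Matrix.single l q 1)) ⊗ₜ[R] (1:C))
          = (1:A) ⊗ₜ[R] (∑ p ∈ s.attach, M p k l • p.1.2) := by
        rw [← Finset.sum_attach s (fun p => p.1 ⊗ₜ[R] p.2)]
        calc ∑ q : Fin n,
            ((φ (Matrix.single q k 1)) ⊗ₜ[R] (1:C))
              * (∑ p ∈ s.attach, p.1.1 ⊗ₜ[R] p.1.2)
              * ((φ (Matrix.single l q 1)) ⊗ₜ[R] (1:C))
            = ∑ q : Fin n, ∑ p ∈ s.attach,
                (φ (Matrix.single q k 1) * p.1.1 * φ (Matrix.single l q 1))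
                  ⊗ₜ[R] p.1.2 := by
              refine Finset.sum_congr rfl fun q _ => ?_
              rw [Finset.mul_sum, Finset.sum_mul]
              refine Finset.sum_congr rfl fun p _ => ?_
              rw [Algebra.TensorProduct.tmul_mul_tmul, Algebra.TensorProduct.tmul_mul_tmul,
                one_mul, mul_one]
          _ = ∑ q : Fin n, ∑ p ∈ s.attach,
                φ (Matrix.single q q 1) ⊗ₜ[R] (M p k l • p.1.2) := by
              refine Finset.sum_congr rfl fun q _ => Finset.sum_congr rfl fun p _ => ?_
              rw [← hφa p, F3, TensorProduct.smul_tmul]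
          _ = (∑ q : Fin n, φ (Matrix.single q q 1))
                ⊗ₜ[R] (∑ p ∈ s.attach, M p k l • p.1.2) := by
              rw [TensorProduct.sum_tmul]
              exact Finset.sum_congr rfl fun q _ => (TensorProduct.tmul_sum _ _ _).symm
          _ = (1:A) ⊗ₜ[R] (∑ p ∈ s.attach, M p k l • p.1.2) := by rw [F2]
      exact eq1 ▸ hy
    rw [hx']
    exact sum_mem fun k _ => sum_mem fun l _ =>
      Submodule.subset_span ⟨_, _, hC k l, rfl⟩
  refine ⟨⟨Subalgebra.comap (Algebra.TensorProduct.includeRight) B, ?_⟩, ?_, ?_⟩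
  · ext c
    simp [Subalgebra.mem_comap, Algebra.TensorProduct.includeRight_apply]
  · apply le_antisymm
    · intro x hx
      have hxs := key x hx
      have hsub : {x : A ⊗[R] C | ∃ (a : A) (d : C), (1 : A) ⊗ₜ[R] d ∈ B ∧ x = a ⊗ₜ[R] d}
          ⊆ (Subalgebra.toSubmodule (Algebra.adjoin R
            ({x : A ⊗[R] C | ∃ a : A, x = a ⊗ₜ[R] (1 : C)} ∪
             {x : A ⊗[R] C | ∃ d : C, (1 : A) ⊗ₜ[R] d ∈ B ∧ x = (1 : A) ⊗ₜ[R] d})) : Set _) := by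
        rintro y ⟨a, d, hd, rfl⟩
        have h1 : a ⊗ₜ[R] (1:C) ∈ Algebra.adjoin R
            ({x : A ⊗[R] C | ∃ a : A, x = a ⊗ₜ[R] (1 : C)} ∪
             {x : A ⊗[R] C | ∃ d : C, (1 : A) ⊗ₜ[R] d ∈ B ∧ x = (1 : A) ⊗ₜ[R] d}) :=
          Algebra.subset_adjoin (Or.inl ⟨a, rfl⟩)
        have h2 : (1:A) ⊗ₜ[R] d ∈ Algebra.adjoin R
            ({x : A ⊗[R] C | ∃ a : A, x = a ⊗ₜ[R] (1 : C)} ∪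
             {x : A ⊗[R] C | ∃ d : C, (1 : A) ⊗ₜ[R] d ∈ B ∧ x = (1 : A) ⊗ₜ[R] d}) :=
          Algebra.subset_adjoin (Or.inr ⟨d, hd, rfl⟩)
        have := mul_mem h1 h2
        rw [Algebra.TensorProduct.tmul_mul_tmul, mul_one, one_mul] at this; exact this
      exact Submodule.span_le.mpr hsub hxs
    · rw [Algebra.adjoin_le_iff]
      rintro x (⟨a, rfl⟩ | ⟨d, hd, rfl⟩)
      · exact hB a
      · exact hd
  · apply Set.Subset.antisymm
    · exact fun x hx => key x hx
    · exact fun x hx => spanle hx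
end

section
/- Let R be a commutative unital ring and let M and N be R-modules. If M is faithfully flat as an R-module and the tensor product M ⊗_R N is faithfully flat as an R-module, then N is faithfully flat as an R-module. -/
open scoped TensorProduct

/-- If `M` is faithfully flat and `g ⊗ id_M` is injective, then `g` is injective. -/
lemma aux_reflect_inj (R : Type*) [CommRing R]
    (M : Type*) [AddCommGroup M] [Module R M] [Module.FaithfullyFlat R M]
    {A B : Type*} [AddCommGroup A] [Module R A] [AddCommGroup B] [Module R B]
    (g : A →ₗ[R] B) (h : Function.Injective (g.lTensor M)) : Function.Injective g := by
  have hcomp : g ∘ₗ (LinearMap.ker g).subtype = 0 := by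
    ext ⟨x, hx⟩; exact hx
  have h0 : ((LinearMap.ker g).subtype).lTensor M = 0 := by
    have : (g.lTensor M) ∘ₗ (((LinearMap.ker g).subtype).lTensor M) = 0 := by
      rw [← LinearMap.lTensor_comp, hcomp, LinearMap.lTensor_zero]
    apply LinearMap.ext
    intro x
    apply h
    simpa using congr($this x)
  have hsub : (LinearMap.ker g).subtype = 0 :=
    (Module.FaithfullyFlat.zero_iff_lTensor_zero R M _).mpr h0
  rw [← LinearMap.ker_eq_bot, eq_bot_iff]
  intro x hx
  have : (LinearMap.ker g).subtype ⟨x, hx⟩ = 0 := by rw [hsub]; rfl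
  simpa using this

/-- Let `R` be a commutative unital ring and `M`, `N` be `R`-modules.
If `M` is faithfully flat over `R` and `M ⊗[R] N` is faithfully flat over `R`, then `N`
is faithfully flat over `R`. -/
theorem stmt3 (R : Type*) [CommRing R]
    (M : Type*) [AddCommGroup M] [Module R M]
    (N : Type*) [AddCommGroup N] [Module R N]
    [Module.FaithfullyFlat R M] [Module.FaithfullyFlat R (M ⊗[R] N)] :
    Module.FaithfullyFlat R N := by
  rw [Module.FaithfullyFlat.iff_zero_iff_lTensor_zero]
  constructor
  · -- `N` is flat
    rw [Module.Flat.iff_lTensor_preserves_injective_linearMap]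
    intro N1 N2 _ _ _ _ f hf
    have h1 : Function.Injective (f.lTensor (M ⊗[R] N)) :=
      Module.Flat.lTensor_preserves_injective_linearMap f hf
    have h2 : Function.Injective ((f.lTensor N).lTensor M) := by
      have key : ((f.lTensor N).lTensor M) =
          (TensorProduct.assoc R M N N2).toLinearMap ∘ₗ f.lTensor (M ⊗[R] N) ∘ₗ
            (TensorProduct.assoc R M N N1).symm.toLinearMap := by
        ext; rfl
      rw [key]
      exact ((TensorProduct.assoc R M N N2).injective.comp h1).comp
        (TensorProduct.assoc R M N N1).symm.injective
    exact aux_reflect_inj R M (f.lTensor N) h2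
  · -- tensoring with `N` reflects zero maps
    intro N1 _ _ N2 _ _ f
    refine ⟨fun h => ?_, fun h => h ▸ LinearMap.lTensor_zero N⟩
    have h0 : f.lTensor (M ⊗[R] N) = 0 := by
      have key : f.lTensor (M ⊗[R] N) =
          (TensorProduct.assoc R M N N2).symm.toLinearMap ∘ₗ ((f.lTensor N).lTensor M) ∘ₗ
            (TensorProduct.assoc R M N N1).toLinearMap := by
        ext; rfl
      rw [key, h, LinearMap.lTensor_zero]
      ext; simp
    exact (Module.FaithfullyFlat.zero_iff_lTensor_zero R (M ⊗[R] N) f).mpr h0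
end
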